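/- arXiv:2203.06616 — 3 statements merged into one kernel-verified Lean document; each statement's English description precedes it below -/
import Mathlib

section
/- Let F and E be real inner product spaces, let Θ ⊆ F be a convex set, and let f : F × E → ℝ be such that for each w ∈ E the map θ ↦ f(θ, w) has a gradient ∇_θ f(θ, w), and the map (θ, w) ↦ ∇_θ f(θ, w) satisfies ‖∇_θ f(θ, w) − ∇_θ f(θ, w')‖ ≤ L_θw ‖w − w'‖ for all θ ∈ Θ and w, w' ∈ E, where L_θw > 0. Suppose for each w ∈ E the map θ ↦ f(θ, w) is μ-strongly concave on Θ with μ > 0, i.e. f(θ₁, w) − f(θ₂, w) ≤ ⟪∇_θ f(θ₂, w), θ₁ − θ₂⟫ − (μ/2)‖θ₁ − θ₂‖² for all θ₁, θ₂ ∈ Θ. If θ₁ ∈ Θ is a maximizer of f(·, w₁) over Θ (so that ⟪∇_θ f(θ₁, w₁), θ − θ₁⟫ ≤ 0 for all θ ∈ Θ) and θ₂ ∈ Θ is a maximizer of f(·, w₂) over Θ (so that ⟪∇_θ f(θ₂, w₂), θ − θ₂⟫ ≤ 0 for all θ ∈ Θ), then μ ‖θ₁ − θ₂‖ ≤ L_θw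 ‖w₁ − w₂‖. -/
open RealInnerProductSpace

/-! Adding the first-order strong concavity inequalities at `θ₁` and `θ₂` for `f(·, w₁)`
gives `μ‖θ₁ - θ₂‖² ≤ ⟪∇f(θ₂, w₁) - ∇f(θ₁, w₁), θ₁ - θ₂⟫`. The two optimality conditions
let us replace `∇f(θ₁, w₁)` by `∇f(θ₂, w₂)` without decreasing the right-hand side, which
is then at most `L_θw ‖w₁ - w₂‖ ‖θ₁ - θ₂‖` by Cauchy–Schwarz and the Lipschitz bound. -/

lemma mul_norm_sub_sq_le_inner_of_strongConcave {F : Type*} [NormedAddCommGroup F]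
    [InnerProductSpace ℝ F] {s : Set F} {φ : F → ℝ} {G : F → F} {μ : ℝ}
    (h : ∀ x ∈ s, ∀ y ∈ s, φ x - φ y ≤ ⟪G y, x - y⟫ - μ / 2 * ‖x - y‖ ^ 2)
    {x y : F} (hx : x ∈ s) (hy : y ∈ s) :
    μ * ‖x - y‖ ^ 2 ≤ ⟪G y - G x, x - y⟫ := by
  have hxy := h x hx y hy
  have hyx := h y hy x hx
  rw [← neg_sub x y, inner_neg_right, norm_neg] at hyx
  rw [inner_sub_left]
  linarith

lemma mul_le_of_mul_sq_le_mul {μ c t : ℝ} (hc : 0 ≤ c) (ht : 0 ≤ t)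
    (h : μ * t ^ 2 ≤ c * t) : μ * t ≤ c := by
  rcases ht.eq_or_lt with rfl | ht
  · simpa using hc
  · exact le_of_mul_le_mul_right (by linarith) ht

theorem maximizers_lipschitz_in_w_general
    {F E : Type*} [NormedAddCommGroup F] [InnerProductSpace ℝ F]
    [NormedAddCommGroup E] [InnerProductSpace ℝ E]
    (Θ : Set F)
    (f : F → E → ℝ) (gradθ : F → E → F)
    (Lθw μ : ℝ)
    (hLip : ∀ θ ∈ Θ, ∀ w w' : E, ‖gradθ θ w - gradθ θ w'‖ ≤ Lθw * ‖w - w'‖)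
    (hconc : ∀ (w : E), ∀ θ₁ ∈ Θ, ∀ θ₂ ∈ Θ,
      f θ₁ w - f θ₂ w ≤ ⟪gradθ θ₂ w, θ₁ - θ₂⟫ - μ / 2 * ‖θ₁ - θ₂‖ ^ 2)
    (w₁ w₂ : E) (θ₁ θ₂ : F) (hθ₁ : θ₁ ∈ Θ) (hθ₂ : θ₂ ∈ Θ)
    (hopt₁ : ∀ θ ∈ Θ, ⟪gradθ θ₁ w₁, θ - θ₁⟫ ≤ 0)
    (hopt₂ : ∀ θ ∈ Θ, ⟪gradθ θ₂ w₂, θ - θ₂⟫ ≤ 0) :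
    μ * ‖θ₁ - θ₂‖ ≤ Lθw * ‖w₁ - w₂‖ := by
  have hmono : μ * ‖θ₁ - θ₂‖ ^ 2 ≤ ⟪gradθ θ₂ w₁ - gradθ θ₁ w₁, θ₁ - θ₂⟫ :=
    mul_norm_sub_sq_le_inner_of_strongConcave (hconc w₁) hθ₁ hθ₂
  have hopt : ⟪gradθ θ₂ w₂ - gradθ θ₁ w₁, θ₁ - θ₂⟫ ≤ 0 := by
    have h₁ := hopt₁ θ₂ hθ₂
    rw [← neg_sub θ₁ θ₂, inner_neg_right] at h₁
    rw [inner_sub_left]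
    linarith [hopt₂ θ₁ hθ₁]
  have hL := hLip θ₂ hθ₂ w₁ w₂
  have key : μ * ‖θ₁ - θ₂‖ ^ 2 ≤ Lθw * ‖w₁ - w₂‖ * ‖θ₁ - θ₂‖ :=
    calc μ * ‖θ₁ - θ₂‖ ^ 2
        ≤ ⟪gradθ θ₂ w₁ - gradθ θ₂ w₂, θ₁ - θ₂⟫ + ⟪gradθ θ₂ w₂ - gradθ θ₁ w₁, θ₁ - θ₂⟫ := by
          rwa [← inner_add_left, sub_add_sub_cancel]
      _ ≤ ‖gradθ θ₂ w₁ - gradθ θ₂ w₂‖ * ‖θ₁ - θ₂‖ := by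
          linarith [real_inner_le_norm (gradθ θ₂ w₁ - gradθ θ₂ w₂) (θ₁ - θ₂)]
      _ ≤ Lθw * ‖w₁ - w₂‖ * ‖θ₁ - θ₂‖ := by gcongr
  exact mul_le_of_mul_sq_le_mul ((norm_nonneg _).trans hL) (norm_nonneg _) key

/-- For a function `f : F × E → ℝ` whose partial gradient in `θ`
is `L_θw`-Lipschitz in `w` on the convex set `Θ`, and which is `μ`-strongly
concave in `θ` on `Θ`, any two maximizers `θ₁` of `f(·, w₁)` and `θ₂` of
`f(·, w₂)` over `Θ` satisfy `μ‖θ₁ - θ₂‖ ≤ L_θw ‖w₁ - w₂‖`. -/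
theorem maximizers_lipschitz_in_w
    {F E : Type*} [NormedAddCommGroup F] [InnerProductSpace ℝ F]
    [NormedAddCommGroup E] [InnerProductSpace ℝ E]
    (Θ : Set F) (hΘ : Convex ℝ Θ)
    (f : F → E → ℝ) (gradθ : F → E → F)
    (hdiff : ∀ (w : E) (θ : F), HasFDerivAt (fun θ' => f θ' w) (innerSL ℝ (gradθ θ w)) θ)
    (Lθw μ : ℝ) (hLθw : 0 < Lθw) (hμ : 0 < μ)
    (hLip : ∀ θ ∈ Θ, ∀ w w' : E, ‖gradθ θ w - gradθ θ w'‖ ≤ Lθw * ‖w - w'‖)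
    (hconc : ∀ (w : E), ∀ θ₁ ∈ Θ, ∀ θ₂ ∈ Θ,
      f θ₁ w - f θ₂ w ≤ ⟪gradθ θ₂ w, θ₁ - θ₂⟫ - μ / 2 * ‖θ₁ - θ₂‖ ^ 2)
    (w₁ w₂ : E) (θ₁ θ₂ : F) (hθ₁ : θ₁ ∈ Θ) (hθ₂ : θ₂ ∈ Θ)
    (hopt₁ : ∀ θ ∈ Θ, ⟪gradθ θ₁ w₁, θ - θ₁⟫ ≤ 0)
    (hopt₂ : ∀ θ ∈ Θ, ⟪gradθ θ₂ w₂, θ - θ₂⟫ ≤ 0) :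
    μ * ‖θ₁ - θ₂‖ ≤ Lθw * ‖w₁ - w₂‖ :=
  maximizers_lipschitz_in_w_general Θ f gradθ Lθw μ hLip hconc w₁ w₂ θ₁ θ₂ hθ₁ hθ₂ hopt₁ hopt₂
end

section
/- Let F and E be real inner product spaces, Θ ⊆ F a convex set, and f : F × E → ℝ with partial gradients ∇_θ f and ∇_w f. Assume: (i) ‖∇_w f(θ, w) − ∇_w f(θ, w')‖ ≤ L_ww ‖w − w'‖ for all θ ∈ Θ, w, w' ∈ E; (ii) ‖∇_w f(θ, w) − ∇_w f(θ', w)‖ ≤ L_wθ ‖θ − θ'‖ for all θ, θ' ∈ Θ, w ∈ E; (iii) ‖∇_θ f(θ, w) − ∇_θ f(θ, w')‖ ≤ L_θw ‖w − w'‖ for all θ ∈ Θ, w, w' ∈ E, with L_ww, L_wθ, L_θw > 0; (iv) for every w, θ ↦ f(θ, w) is μ-strongly concave on Θ with μ > 0. Let θ* : E → Θ assign to each w a maximizer of f(·, w) over Θ, i.e. ⟪∇_θ f(θ*(w), w), θ − θ*(w)⟫ ≤ 0 for all θ ∈ Θ. Then the map w ↦ ∇_w f(θ*(w), w) is Lipschitz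 continuous with constant L₀ = L_wθ L_θw / μ + L_ww, i.e. ‖∇_w f(θ*(w₁), w₁) − ∇_w f(θ*(w₂), w₂)‖ ≤ L₀ ‖w₁ − w₂‖ for all w₁, w₂ ∈ E. -/
open RealInnerProductSpace

/-! Adding the strong concavity inequality at `(θ₁, θ₂)` and at `(θ₂, θ₁)` shows that
`-∇_θ f(·, w)` is `μ`-strongly monotone. Combined with the first-order optimality conditions
for `θ*(w₁)` and `θ*(w₂)`, this gives `μ ‖θ*(w₁) - θ*(w₂)‖ ≤ L_θw ‖w₁ - w₂‖`; the triangle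
inequality through `∇_w f(θ*(w₂), w₁)` then yields the constant `L_wθ L_θw / μ + L_ww`. -/

section

variable {F : Type*} [NormedAddCommGroup F] [InnerProductSpace ℝ F]

theorem mul_norm_sub_sq_le_inner_grad_sub {g : F → ℝ} {G : F → F} {μ : ℝ} {x y : F}
    (hxy : g x - g y ≤ ⟪G y, x - y⟫ - μ / 2 * ‖x - y‖ ^ 2)
    (hyx : g y - g x ≤ ⟪G x, y - x⟫ - μ / 2 * ‖y - x‖ ^ 2) :
    μ * ‖x - y‖ ^ 2 ≤ ⟪G y - G x, x - y⟫ := by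
  rw [norm_sub_rev y x, ← neg_sub x y, inner_neg_right] at hyx
  rw [inner_sub_left]
  linarith

theorem mul_norm_sub_le_norm_grad_sub_of_optimal {G₁ G₂ : F → F} {μ : ℝ} {x₁ x₂ : F}
    (hopt₁ : ⟪G₁ x₁, x₂ - x₁⟫ ≤ 0) (hopt₂ : ⟪G₂ x₂, x₁ - x₂⟫ ≤ 0)
    (hmono : μ * ‖x₁ - x₂‖ ^ 2 ≤ ⟪G₁ x₂ - G₁ x₁, x₁ - x₂⟫) :
    μ * ‖x₁ - x₂‖ ≤ ‖G₁ x₂ - G₂ x₂‖ := by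
  rw [← neg_sub x₁ x₂, inner_neg_right] at hopt₁
  have hsq : μ * ‖x₁ - x₂‖ * ‖x₁ - x₂‖ ≤ ‖G₁ x₂ - G₂ x₂‖ * ‖x₁ - x₂‖ :=
    calc μ * ‖x₁ - x₂‖ * ‖x₁ - x₂‖ ≤ ⟪G₁ x₂ - G₁ x₁, x₁ - x₂⟫ := by linarith
      _ ≤ ⟪G₁ x₂ - G₂ x₂, x₁ - x₂⟫ := by simp only [inner_sub_left]; linarith
      _ ≤ ‖G₁ x₂ - G₂ x₂‖ * ‖x₁ - x₂‖ := real_inner_le_norm _ _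
  rcases (norm_nonneg (x₁ - x₂)).eq_or_lt with h0 | hpos
  · rw [← h0, mul_zero]
    exact norm_nonneg _
  · exact le_of_mul_le_mul_right hsq hpos

end

theorem grad_of_max_is_lipschitz_general
    {F E : Type*} [NormedAddCommGroup F] [InnerProductSpace ℝ F]
    [NormedAddCommGroup E] [InnerProductSpace ℝ E]
    (Θ : Set F)
    (f : F → E → ℝ) (gradθ : F → E → F) (gradw : F → E → E)
    (Lww Lwθ Lθw μ : ℝ) (hLwθ : 0 < Lwθ) (hμ : 0 < μ)
    (hLip₁ : ∀ θ ∈ Θ, ∀ w w' : E, ‖gradw θ w - gradw θ w'‖ ≤ Lww * ‖w - w'‖)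
    (hLip₂ : ∀ θ ∈ Θ, ∀ θ' ∈ Θ, ∀ w : E, ‖gradw θ w - gradw θ' w‖ ≤ Lwθ * ‖θ - θ'‖)
    (hLip₃ : ∀ θ ∈ Θ, ∀ w w' : E, ‖gradθ θ w - gradθ θ w'‖ ≤ Lθw * ‖w - w'‖)
    (hconc : ∀ (w : E), ∀ θ₁ ∈ Θ, ∀ θ₂ ∈ Θ,
      f θ₁ w - f θ₂ w ≤ ⟪gradθ θ₂ w, θ₁ - θ₂⟫ - μ / 2 * ‖θ₁ - θ₂‖ ^ 2)
    (θstar : E → F) (hθstar : ∀ w : E, θstar w ∈ Θ)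
    (hopt : ∀ (w : E), ∀ θ ∈ Θ, ⟪gradθ (θstar w) w, θ - θstar w⟫ ≤ 0) :
    ∀ w₁ w₂ : E,
      ‖gradw (θstar w₁) w₁ - gradw (θstar w₂) w₂‖ ≤
        (Lwθ * Lθw / μ + Lww) * ‖w₁ - w₂‖ := by
  intro w₁ w₂
  have hθ₁ := hθstar w₁
  have hθ₂ := hθstar w₂
  have hmono := mul_norm_sub_sq_le_inner_grad_sub (g := (f · w₁)) (G := (gradθ · w₁))
    (hconc w₁ _ hθ₁ _ hθ₂) (hconc w₁ _ hθ₂ _ hθ₁)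
  have hθstar_dist : ‖θstar w₁ - θstar w₂‖ ≤ Lθw / μ * ‖w₁ - w₂‖ := by
    rw [div_mul_eq_mul_div, le_div_iff₀ hμ, mul_comm]
    calc μ * ‖θstar w₁ - θstar w₂‖ ≤ ‖gradθ (θstar w₂) w₁ - gradθ (θstar w₂) w₂‖ :=
          mul_norm_sub_le_norm_grad_sub_of_optimal (G₁ := (gradθ · w₁)) (G₂ := (gradθ · w₂))
            (hopt w₁ _ hθ₂) (hopt w₂ _ hθ₁) hmono
      _ ≤ Lθw * ‖w₁ - w₂‖ := hLip₃ _ hθ₂ w₁ w₂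
  calc ‖gradw (θstar w₁) w₁ - gradw (θstar w₂) w₂‖
      ≤ ‖gradw (θstar w₁) w₁ - gradw (θstar w₂) w₁‖
          + ‖gradw (θstar w₂) w₁ - gradw (θstar w₂) w₂‖ := norm_sub_le_norm_sub_add_norm_sub _ _ _
    _ ≤ Lwθ * (Lθw / μ * ‖w₁ - w₂‖) + Lww * ‖w₁ - w₂‖ := by
        gcongr
        · exact (hLip₂ _ hθ₁ _ hθ₂ w₁).trans (by gcongr)
        · exact hLip₁ _ hθ₂ w₁ w₂
    _ = (Lwθ * Lθw / μ + Lww) * ‖w₁ - w₂‖ := by ring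

/-- Lemma 1, gradient part: under the Lipschitz gradient conditions
and `μ`-strong concavity in `θ`, the map `w ↦ ∇_w f(θ*(w), w)` along the
maximizer selection `θ*` is Lipschitz with constant `L₀ = L_wθ L_θw / μ + L_ww`. -/
theorem grad_of_max_is_lipschitz
    {F E : Type*} [NormedAddCommGroup F] [InnerProductSpace ℝ F]
    [NormedAddCommGroup E] [InnerProductSpace ℝ E]
    (Θ : Set F) (hΘ : Convex ℝ Θ)
    (f : F → E → ℝ) (gradθ : F → E → F) (gradw : F → E → E)
    (hdiffθ : ∀ (w : E) (θ : F), HasFDerivAt (fun θ' => f θ' w) (innerSL ℝ (gradθ θ w)) θ)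
    (hdiffw : ∀ (θ : F) (w : E), HasFDerivAt (fun w' => f θ w') (innerSL ℝ (gradw θ w)) w)
    (Lww Lwθ Lθw μ : ℝ) (hLww : 0 < Lww) (hLwθ : 0 < Lwθ) (hLθw : 0 < Lθw) (hμ : 0 < μ)
    (hLip₁ : ∀ θ ∈ Θ, ∀ w w' : E, ‖gradw θ w - gradw θ w'‖ ≤ Lww * ‖w - w'‖)
    (hLip₂ : ∀ θ ∈ Θ, ∀ θ' ∈ Θ, ∀ w : E, ‖gradw θ w - gradw θ' w‖ ≤ Lwθ * ‖θ - θ'‖)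
    (hLip₃ : ∀ θ ∈ Θ, ∀ w w' : E, ‖gradθ θ w - gradθ θ w'‖ ≤ Lθw * ‖w - w'‖)
    (hconc : ∀ (w : E), ∀ θ₁ ∈ Θ, ∀ θ₂ ∈ Θ,
      f θ₁ w - f θ₂ w ≤ ⟪gradθ θ₂ w, θ₁ - θ₂⟫ - μ / 2 * ‖θ₁ - θ₂‖ ^ 2)
    (θstar : E → F) (hθstar : ∀ w : E, θstar w ∈ Θ)
    (hopt : ∀ (w : E), ∀ θ ∈ Θ, ⟪gradθ (θstar w) w, θ - θstar w⟫ ≤ 0) :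
    ∀ w₁ w₂ : E,
      ‖gradw (θstar w₁) w₁ - gradw (θstar w₂) w₂‖ ≤
        (Lwθ * Lθw / μ + Lww) * ‖w₁ - w₂‖ :=
  grad_of_max_is_lipschitz_general Θ f gradθ gradw Lww Lwθ Lθw μ hLwθ hμ hLip₁ hLip₂ hLip₃ hconc
    θstar hθstar hopt
end

section
/- Let F and E be real inner product spaces, Θ ⊆ F a convex set, and f : F × E → ℝ with partial gradients ∇_θ f and ∇_w f satisfying: ‖∇_w f(θ, w) − ∇_w f(θ, w')‖ ≤ L_ww ‖w − w'‖ for all θ ∈ Θ; ‖∇_w f(θ, w) − ∇_w f(θ', w)‖ ≤ L_wθ ‖θ − θ'‖ for all w ∈ E; ‖∇_θ f(θ, w) − ∇_θ f(θ, w')‖ ≤ L_θw ‖w − w'‖ for all θ ∈ Θ; and θ ↦ f(θ, w) is μ-strongly concave on Θ for every w, with L_ww, L_wθ, L_θw, μ > 0. Let θ* : E → Θ assign to each w a maximizer of f(·, w) over Θ, define Φ(w) = f(θ*(w), w), and suppose Φ is differentiable with ∇Φ(w) = ∇_w f(θ*(w), w) for all w. Then for all w₁, w₂ ∈ E, Φ(w₁)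 ≤ Φ(w₂) + ⟪∇Φ(w₂), w₁ − w₂⟫ + (L₀/2)‖w₁ − w₂‖², where L₀ = L_wθ L_θw / μ + L_ww. -/
open RealInnerProductSpace

/-!
Strong concavity in `θ` together with first-order optimality makes the maximizer map `θ*`
`(L_θw / μ)`-Lipschitz, so `w ↦ ∇_w f(θ*(w), w)` is `L₀`-Lipschitz by the triangle inequality.
The bound is then the usual descent lemma for a function with `L₀`-Lipschitz gradient, proved by
restricting to the segment from `w₂` to `w₁`.
-/

section Maximizer

variable {F : Type*} [NormedAddCommGroup F] [InnerProductSpace ℝ F]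

lemma mul_norm_sub_sq_le_inner_of_stronglyConcave {Θ : Set F} {h : F → ℝ} {g : F → F} {μ : ℝ}
    (hconc : ∀ θ₁ ∈ Θ, ∀ θ₂ ∈ Θ, h θ₁ - h θ₂ ≤ ⟪g θ₂, θ₁ - θ₂⟫ - μ / 2 * ‖θ₁ - θ₂‖ ^ 2)
    {θ₁ θ₂ : F} (h₁ : θ₁ ∈ Θ) (h₂ : θ₂ ∈ Θ) :
    μ * ‖θ₁ - θ₂‖ ^ 2 ≤ ⟪g θ₂ - g θ₁, θ₁ - θ₂⟫ := by
  have h₁₂ := hconc θ₁ h₁ θ₂ h₂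
  have h₂₁ := hconc θ₂ h₂ θ₁ h₁
  rw [norm_sub_rev θ₂ θ₁, ← neg_sub θ₁ θ₂, inner_neg_right] at h₂₁
  rw [inner_sub_left]
  linarith

/-- Stability of a maximizer under perturbation of the gradient field. -/
lemma mul_norm_sub_le_norm_sub_of_stronglyConcave {Θ : Set F} {h : F → ℝ} {ga gb : F → F}
    {μ : ℝ}
    (hconc : ∀ θ₁ ∈ Θ, ∀ θ₂ ∈ Θ, h θ₁ - h θ₂ ≤ ⟪ga θ₂, θ₁ - θ₂⟫ - μ / 2 * ‖θ₁ - θ₂‖ ^ 2)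
    {θa θb : F} (ha : θa ∈ Θ) (hb : θb ∈ Θ)
    (hoptA : ∀ θ ∈ Θ, ⟪ga θa, θ - θa⟫ ≤ 0) (hoptB : ∀ θ ∈ Θ, ⟪gb θb, θ - θb⟫ ≤ 0) :
    μ * ‖θa - θb‖ ≤ ‖ga θb - gb θb‖ := by
  have hmono := mul_norm_sub_sq_le_inner_of_stronglyConcave hconc ha hb
  have hA := hoptA θb hb
  rw [← neg_sub θa θb, inner_neg_right] at hA
  have hkey : μ * ‖θa - θb‖ ^ 2 ≤ ‖ga θb - gb θb‖ * ‖θa - θb‖ :=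
    calc μ * ‖θa - θb‖ ^ 2 ≤ ⟪ga θb - gb θb, θa - θb⟫ + ⟪gb θb, θa - θb⟫ := by
          rw [inner_sub_left] at hmono ⊢; linarith
      _ ≤ ‖ga θb - gb θb‖ * ‖θa - θb‖ :=
          add_le_of_le_of_nonpos (real_inner_le_norm _ _) (hoptB θa ha)
  rcases (norm_nonneg (θa - θb)).eq_or_lt with hzero | hpos
  · rw [← hzero, mul_zero]; exact norm_nonneg _
  · nlinarith

end Maximizer

section Descent

variable {E : Type*} [NormedAddCommGroup E] [InnerProductSpace ℝ E]

lemma le_add_add_of_hasDerivAt_sub_le {g g' : ℝ → ℝ} {K : ℝ}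
    (hg : ∀ t, HasDerivAt g (g' t) t) (hg' : ∀ t ∈ Set.Ioo (0 : ℝ) 1, g' t - g' 0 ≤ K * t) :
    g 1 ≤ g 0 + g' 0 + K / 2 := by
  set ψ : ℝ → ℝ := fun t => g t - g' 0 * t - K / 2 * t ^ 2
  have hψ : ∀ t, HasDerivAt ψ (g' t - g' 0 - K * t) t := fun t => by
    have hsq := (hasDerivAt_pow 2 t).const_mul (K / 2)
    refine (((hg t).sub ((hasDerivAt_id' t).const_mul (g' 0))).sub hsq).congr_deriv ?_
    push_cast
    ring
  have hanti : AntitoneOn ψ (Set.Icc 0 1) := by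
    refine antitoneOn_of_deriv_nonpos (convex_Icc 0 1)
      (fun t _ => (hψ t).continuousAt.continuousWithinAt)
      (fun t _ => (hψ t).differentiableAt.differentiableWithinAt) fun t ht => ?_
    rw [interior_Icc] at ht
    rw [(hψ t).deriv]
    linarith [hg' t ht]
  have h01 := hanti (Set.left_mem_Icc.mpr zero_le_one) (Set.right_mem_Icc.mpr zero_le_one)
    zero_le_one
  simp only [ψ] at h01
  linarith

lemma le_add_inner_add_of_lipschitz_gradient {Φ : E → ℝ} {G : E → E} {L : ℝ}
    (hΦ : ∀ w, HasFDerivAt Φ (innerSL ℝ (G w)) w) (hG : ∀ a b, ‖G a - G b‖ ≤ L * ‖a - b‖)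
    (x y : E) : Φ x ≤ Φ y + ⟪G y, x - y⟫ + L / 2 * ‖x - y‖ ^ 2 := by
  set Δ := x - y
  have hline : ∀ t : ℝ, HasDerivAt (fun s : ℝ => y + s • Δ) Δ t := fun t => by
    simpa using ((hasDerivAt_id t).smul_const Δ).const_add y
  have hderiv : ∀ t : ℝ, HasDerivAt (fun s : ℝ => Φ (y + s • Δ)) ⟪G (y + t • Δ), Δ⟫ t :=
    fun t => by
      have h := (hΦ (y + t • Δ)).comp_hasDerivAt t (hline t)
      simp only [coe_innerSL_apply] at h
      exact h
  have hbound : ∀ t ∈ Set.Ioo (0 : ℝ) 1,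
      ⟪G (y + t • Δ), Δ⟫ - ⟪G (y + (0 : ℝ) • Δ), Δ⟫ ≤ L * ‖Δ‖ ^ 2 * t := fun t ht =>
    calc ⟪G (y + t • Δ), Δ⟫ - ⟪G (y + (0 : ℝ) • Δ), Δ⟫ = ⟪G (y + t • Δ) - G y, Δ⟫ := by
          rw [zero_smul, add_zero, inner_sub_left]
      _ ≤ ‖G (y + t • Δ) - G y‖ * ‖Δ‖ := real_inner_le_norm _ _
      _ ≤ L * ‖y + t • Δ - y‖ * ‖Δ‖ := by gcongr; exact hG _ _
      _ = L * ‖Δ‖ ^ 2 * t := by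
          rw [add_sub_cancel_left, norm_smul, Real.norm_eq_abs, abs_of_pos ht.1]; ring
  have h := le_add_add_of_hasDerivAt_sub_le hderiv hbound
  simp only [zero_smul, add_zero, one_smul, Δ, add_sub_cancel] at h
  linarith

end Descent

theorem max_function_descent_bound_general
    {F E : Type*} [NormedAddCommGroup F] [InnerProductSpace ℝ F]
    [NormedAddCommGroup E] [InnerProductSpace ℝ E]
    (Θ : Set F)
    (f : F → E → ℝ) (gradθ : F → E → F) (gradw : F → E → E)
    (Lww Lwθ Lθw μ : ℝ) (hLwθ : 0 < Lwθ) (hμ : 0 < μ)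
    (hLip₁ : ∀ θ ∈ Θ, ∀ w w' : E, ‖gradw θ w - gradw θ w'‖ ≤ Lww * ‖w - w'‖)
    (hLip₂ : ∀ θ ∈ Θ, ∀ θ' ∈ Θ, ∀ w : E, ‖gradw θ w - gradw θ' w‖ ≤ Lwθ * ‖θ - θ'‖)
    (hLip₃ : ∀ θ ∈ Θ, ∀ w w' : E, ‖gradθ θ w - gradθ θ w'‖ ≤ Lθw * ‖w - w'‖)
    (hconc : ∀ (w : E), ∀ θ₁ ∈ Θ, ∀ θ₂ ∈ Θ,
      f θ₁ w - f θ₂ w ≤ ⟪gradθ θ₂ w, θ₁ - θ₂⟫ - μ / 2 * ‖θ₁ - θ₂‖ ^ 2)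
    (θstar : E → F) (hθstar : ∀ w : E, θstar w ∈ Θ)
    (hopt : ∀ (w : E), ∀ θ ∈ Θ, ⟪gradθ (θstar w) w, θ - θstar w⟫ ≤ 0)
    (Φ : E → ℝ)
    (hΦdiff : ∀ w : E, HasFDerivAt Φ (innerSL ℝ (gradw (θstar w) w)) w) :
    ∀ w₁ w₂ : E,
      Φ w₁ ≤ Φ w₂ + ⟪gradw (θstar w₂) w₂, w₁ - w₂⟫ +
        (Lwθ * Lθw / μ + Lww) / 2 * ‖w₁ - w₂‖ ^ 2 := by
  have hθLip : ∀ a b, ‖θstar a - θstar b‖ ≤ Lθw / μ * ‖a - b‖ := fun a b => by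
    rw [div_mul_eq_mul_div, le_div_iff₀' hμ]
    exact (mul_norm_sub_le_norm_sub_of_stronglyConcave (gb := (gradθ · b)) (hconc a) (hθstar a) (hθstar b)
      (hopt a) (hopt b)).trans (hLip₃ _ (hθstar b) a b)
  have hgradLip : ∀ a b, ‖gradw (θstar a) a - gradw (θstar b) b‖ ≤
      (Lwθ * Lθw / μ + Lww) * ‖a - b‖ := fun a b =>
    calc ‖gradw (θstar a) a - gradw (θstar b) b‖
        ≤ ‖gradw (θstar a) a - gradw (θstar a) b‖ + ‖gradw (θstar a) b - gradw (θstar b) b‖ :=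
          norm_sub_le_norm_sub_add_norm_sub _ _ _
      _ ≤ Lww * ‖a - b‖ + Lwθ * (Lθw / μ * ‖a - b‖) := by
          gcongr
          · exact hLip₁ _ (hθstar a) a b
          · exact (hLip₂ _ (hθstar a) _ (hθstar b) b).trans
              (mul_le_mul_of_nonneg_left (hθLip a b) hLwθ.le)
      _ = (Lwθ * Lθw / μ + Lww) * ‖a - b‖ := by ring
  exact le_add_inner_add_of_lipschitz_gradient hΦdiff hgradLip

/-- Lemma 1, descent form: under the Lipschitz gradient conditions
and `μ`-strong concavity in `θ`, the max-function `Φ(w) = f(θ*(w), w)` with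
`∇Φ(w) = ∇_w f(θ*(w), w)` satisfies the quadratic upper bound with constant
`L₀ = L_wθ L_θw / μ + L_ww`. -/
theorem max_function_descent_bound
    {F E : Type*} [NormedAddCommGroup F] [InnerProductSpace ℝ F]
    [NormedAddCommGroup E] [InnerProductSpace ℝ E]
    (Θ : Set F) (hΘ : Convex ℝ Θ)
    (f : F → E → ℝ) (gradθ : F → E → F) (gradw : F → E → E)
    (hdiffθ : ∀ (w : E) (θ : F), HasFDerivAt (fun θ' => f θ' w) (innerSL ℝ (gradθ θ w)) θ)
    (hdiffw : ∀ (θ : F) (w : E), HasFDerivAt (fun w' => f θ w') (innerSL ℝ (gradw θ w)) w)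
    (Lww Lwθ Lθw μ : ℝ) (hLww : 0 < Lww) (hLwθ : 0 < Lwθ) (hLθw : 0 < Lθw) (hμ : 0 < μ)
    (hLip₁ : ∀ θ ∈ Θ, ∀ w w' : E, ‖gradw θ w - gradw θ w'‖ ≤ Lww * ‖w - w'‖)
    (hLip₂ : ∀ θ ∈ Θ, ∀ θ' ∈ Θ, ∀ w : E, ‖gradw θ w - gradw θ' w‖ ≤ Lwθ * ‖θ - θ'‖)
    (hLip₃ : ∀ θ ∈ Θ, ∀ w w' : E, ‖gradθ θ w - gradθ θ w'‖ ≤ Lθw * ‖w - w'‖)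
    (hconc : ∀ (w : E), ∀ θ₁ ∈ Θ, ∀ θ₂ ∈ Θ,
      f θ₁ w - f θ₂ w ≤ ⟪gradθ θ₂ w, θ₁ - θ₂⟫ - μ / 2 * ‖θ₁ - θ₂‖ ^ 2)
    (θstar : E → F) (hθstar : ∀ w : E, θstar w ∈ Θ)
    (hopt : ∀ (w : E), ∀ θ ∈ Θ, ⟪gradθ (θstar w) w, θ - θstar w⟫ ≤ 0)
    (Φ : E → ℝ) (hΦ : ∀ w : E, Φ w = f (θstar w) w)
    (hΦdiff : ∀ w : E, HasFDerivAt Φ (innerSL ℝ (gradw (θstar w) w)) w) :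
    ∀ w₁ w₂ : E,
      Φ w₁ ≤ Φ w₂ + ⟪gradw (θstar w₂) w₂, w₁ - w₂⟫ +
        (Lwθ * Lθw / μ + Lww) / 2 * ‖w₁ - w₂‖ ^ 2 :=
  max_function_descent_bound_general Θ f gradθ gradw Lww Lwθ Lθw μ hLwθ hμ hLip₁ hLip₂ hLip₃ hconc
    θstar hθstar hopt Φ hΦdiff
end
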